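/- The 8×4 observability matrix of the SPMSM at identically zero speed, whose rows are (1,0,0,0), (0,1,0,0), and for k=1,2,3 the pairs ((−R/L₀)^k, 0, (−R/L₀)^{k−1}(ψ_r/L₀) sin θ, 0) and (0, (−R/L₀)^k, −(−R/L₀)^{k−1}(ψ_r/L₀) cos θ, 0), has rank exactly 3 when ψ_r ≠ 0 and L₀ ≠ 0. Its kernel is spanned by (0,0,0,1), i.e., the position coordinate θ is unobservable. -/
import Mathlib


open Matrix

theorem spmsm_standstill_observability_matrix_rank
    (R L0 ψr θ : ℝ) (hL0 : L0 ≠ 0) (hψ : ψr ≠ 0) :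
    let O : Matrix (Fin 8) (Fin 4) ℝ :=
      !![1, 0, 0, 0;
         0, 1, 0, 0;
         (-R/L0)^1, 0, (-R/L0)^0 * (ψr/L0) * Real.sin θ, 0;
         0, (-R/L0)^1, -((-R/L0)^0 * (ψr/L0) * Real.cos θ), 0;
         (-R/L0)^2, 0, (-R/L0)^1 * (ψr/L0) * Real.sin θ, 0;
         0, (-R/L0)^2, -((-R/L0)^1 * (ψr/L0) * Real.cos θ), 0;
         (-R/L0)^3, 0, (-R/L0)^2 * (ψr/L0) * Real.sin θ, 0;
         0, (-R/L0)^3, -((-R/L0)^2 * (ψr/L0) * Real.cos θ), 0]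
    O.rank = 3 ∧
    LinearMap.ker O.mulVecLin = Submodule.span ℝ {![0, 0, 0, 1]} := by
  intro O
  have hψL : ψr / L0 ≠ 0 := div_ne_zero hψ hL0
  have hk : LinearMap.ker O.mulVecLin = Submodule.span ℝ {![0, 0, 0, 1]} := by
    apply le_antisymm
    · intro x hx
      simp only [LinearMap.mem_ker, Matrix.mulVecLin_apply] at hx
      have h0 := congrFun hx 0
      have h1 := congrFun hx 1
      have h2 := congrFun hx 2
      have h3 := congrFun hx 3
      simp [O, Matrix.mulVec, dotProduct, Fin.sum_univ_four] at h0 h1 h2 h3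
      have hx0 : x 0 = 0 := by linarith
      have hx1 : x 1 = 0 := by linarith
      rw [hx0] at h2
      rw [hx1] at h3
      have hs : Real.sin θ * x 2 = 0 := by
        rcases mul_eq_zero.1 (by linarith : ψr / L0 * Real.sin θ * x 2 = 0) with h | h
        · rcases mul_eq_zero.1 h with h' | h'
          · exact absurd h' hψL
          · simp [h']
        · simp [h]
      have hc : Real.cos θ * x 2 = 0 := by
        rcases mul_eq_zero.1 (by linarith : ψr / L0 * Real.cos θ * x 2 = 0) with h | h
        · rcases mul_eq_zero.1 h with h' | h'
          · exact absurd h' hψL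
          · simp [h']
        · simp [h]
      have hx2 : x 2 = 0 := by
        nlinarith [Real.sin_sq_add_cos_sq θ, sq_nonneg (x 2), hs, hc]
      have hxe : x = x 3 • ![0, 0, 0, 1] := by
        funext i
        fin_cases i <;> simp [hx0, hx1, hx2]
      rw [hxe]
      exact Submodule.smul_mem _ _ (Submodule.subset_span rfl)
    · rw [Submodule.span_le, Set.singleton_subset_iff]
      simp only [SetLike.mem_coe, LinearMap.mem_ker, Matrix.mulVecLin_apply]
      funext i
      fin_cases i <;>
        simp [O, Matrix.mulVec, dotProduct, Fin.sum_univ_four]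
  refine ⟨?_, hk⟩
  have hrn := LinearMap.finrank_range_add_finrank_ker O.mulVecLin
  rw [hk] at hrn
  have hne : (![0, 0, 0, 1] : Fin 4 → ℝ) ≠ 0 := by
    intro h
    have := congrFun h 3
    simp at this
  rw [finrank_span_singleton hne] at hrn
  simp only [Module.finrank_fintype_fun_eq_card, Fintype.card_fin] at hrn
  have hdef : O.rank = Module.finrank ℝ (LinearMap.range O.mulVecLin) := rfl
  omega
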